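/- Let L be an LC-loop. Then L is centrum square (x² commutes with every element, for all x) if and only if for every z,y in L, R_z ∘ R_{y²} = R_{y·(y·z)}, i.e., composing any right translation with a right translation by a square yields a right translation. -/
import Mathlib


theorem stmt {L : Type*} (mul : L → L → L) (e : L)
    (hid : ∀ x, mul e x = x ∧ mul x e = x)
    (hLbij : ∀ a, Function.Bijective (fun x => mul a x))
    (hRbij : ∀ a, Function.Bijective (fun x => mul x a))
    (hLC : ∀ x y z, mul x (mul y (mul y z)) = mul (mul x (mul y y)) z) :
    (∀ a x, mul (mul a a) x = mul x (mul a a)) ↔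
      (∀ z y, ((fun x => mul x (mul y y)) ∘ (fun x => mul x z)) =
        (fun x => mul x (mul y (mul y z)))) := by
  -- left alternative law
  have la : ∀ y z, mul y (mul y z) = mul (mul y y) z := by
    intro y z
    have h := hLC e y z
    rwa [(hid _).1, (hid _).1] at h
  -- middle nuclear squares
  have nmu : ∀ x y z, mul x (mul (mul y y) z) = mul (mul x (mul y y)) z := by
    intro x y z
    rw [← la, hLC]
  constructor
  · intro hC
    -- left translations by squares commute with all left translations
    have p3 : ∀ y a u, mul (mul y y) (mul a u) = mul a (mul (mul y y) u) := by
      intro y a u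
      obtain ⟨w, hw⟩ := (hLbij (mul y y)).2 u
      simp only at hw
      set c := mul y y with hc
      have sq : mul (mul a c) (mul a c) = mul (mul a a) (mul c c) := by
        calc mul (mul a c) (mul a c) = mul a (mul c (mul a c)) := (nmu a y _).symm
          _ = mul a (mul c (mul c a)) := by rw [← hC y a]
          _ = mul a (mul (mul c c) a) := by rw [la]
          _ = mul a (mul a (mul c c)) := by rw [hC c a]
          _ = mul (mul a a) (mul c c) := la a _
      have key : mul a (mul c (mul a (mul c w))) = mul a (mul a (mul c (mul c w))) := by
        calc mul a (mul c (mul a (mul c w)))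
            = mul (mul a c) (mul a (mul c w)) := nmu a y _
          _ = mul (mul a c) (mul (mul a c) w) := by rw [nmu a y w]
          _ = mul (mul (mul a c) (mul a c)) w := la _ w
          _ = mul (mul (mul a a) (mul c c)) w := by rw [sq]
          _ = mul (mul a a) (mul (mul c c) w) := (nmu _ c w).symm
          _ = mul (mul a a) (mul c (mul c w)) := by rw [la c w]
          _ = mul a (mul a (mul c (mul c w))) := (la a _).symm
      have key2 : mul c (mul a (mul c w)) = mul a (mul c (mul c w)) := (hLbij a).1 key
      rw [← hw]
      exact key2
    -- left nuclear squares
    have nlam : ∀ y a b, mul (mul y y) (mul a b) = mul (mul (mul y y) a) b := by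
      intro y a b
      calc mul (mul y y) (mul a b) = mul a (mul (mul y y) b) := p3 y a b
        _ = mul (mul a (mul y y)) b := nmu a y b
        _ = mul (mul (mul y y) a) b := by rw [hC y a]
    intro z y
    funext x
    simp only [Function.comp]
    calc mul (mul x z) (mul y y) = mul (mul y y) (mul x z) := (hC y _).symm
      _ = mul (mul (mul y y) x) z := nlam y x z
      _ = mul (mul x (mul y y)) z := by rw [hC y x]
      _ = mul x (mul (mul y y) z) := (nmu x y z).symm
      _ = mul x (mul y (mul y z)) := by rw [la]
  · intro h a x
    have h1 := congrFun (h x a) e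
    simp only [Function.comp] at h1
    rw [(hid x).1, (hid (mul a (mul a x))).1] at h1
    rw [h1, la]
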